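/- Let Δ = Δ1 ∪_{Σ1,Σ2} Δ2 be a consistent belief base with syntax splitting and let ω, ω' ∈ Ω_Σ. If ω ≺_{Δ1} ω' and ω|_{Σ2} = ω'|_{Σ2}, then ω ≺_Δ ω'. -/
import Mathlib


open scoped Classical

namespace SysW

/-- Propositional formulas over a signature (set of atoms) `V`. -/
inductive PForm (V : Type) : Type
  | var (v : V)
  | tru
  | fls
  | neg (φ : PForm V)
  | conj (φ ψ : PForm V)
  | disj (φ ψ : PForm V)

/-- Evaluation of a formula in a world `ω : V → Bool`. -/
def PForm.eval {V : Type} (ω : V → Bool) : PForm V → Bool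
  | var v => ω v
  | tru => true
  | fls => false
  | neg φ => !(PForm.eval ω φ)
  | conj φ ψ => PForm.eval ω φ && PForm.eval ω ψ
  | disj φ ψ => PForm.eval ω φ || PForm.eval ω ψ

/-- The atoms occurring in a formula. -/
def PForm.vars {V : Type} : PForm V → Set V
  | var v => {v}
  | tru => ∅
  | fls => ∅
  | neg φ => PForm.vars φ
  | conj φ ψ => PForm.vars φ ∪ PForm.vars ψ
  | disj φ ψ => PForm.vars φ ∪ PForm.vars ψ

/-- A conditional (B|A): "if `ante` then usually `cons`". -/
structure CondRule (V : Type) : Type where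
  cons : PForm V
  ante : PForm V

/-- The atoms occurring in a conditional. -/
def condVars {V : Type} (r : CondRule V) : Set V := r.ante.vars ∪ r.cons.vars

/-- `ω` verifies (B|A) iff `ω ⊨ A ∧ B`. -/
def verifies {V : Type} (ω : V → Bool) (r : CondRule V) : Prop :=
  r.ante.eval ω = true ∧ r.cons.eval ω = true

/-- `ω` falsifies (B|A) iff `ω ⊨ A ∧ ¬B`. -/
def falsifies {V : Type} (ω : V → Bool) (r : CondRule V) : Prop :=
  r.ante.eval ω = true ∧ r.cons.eval ω = false

/-- A conditional `r` is tolerated by a set of conditionals `S` if some world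
verifies `r` and falsifies no conditional of `S`. -/
def Tolerated {V : Type} (S : Finset (CondRule V)) (r : CondRule V) : Prop :=
  ∃ ω : V → Bool, verifies ω r ∧ ∀ r' ∈ S, ¬ falsifies ω r'

/-- `rest Δ j` is what remains of `Δ` after removing the first `j` parts
`Δ^0, …, Δ^{j-1}` of the tolerance partition. -/
noncomputable def rest {V : Type} (Δ : Finset (CondRule V)) : ℕ → Finset (CondRule V)
  | 0 => Δ
  | j + 1 => (rest Δ j).filter (fun r => ¬ Tolerated (rest Δ j) r)

/-- `part Δ j` is the part `Δ^j` of the inclusion-maximal tolerance partition of `Δ`: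
the conditionals of `rest Δ j` tolerated by `rest Δ j`. -/
noncomputable def part {V : Type} (Δ : Finset (CondRule V)) (j : ℕ) : Finset (CondRule V) :=
  (rest Δ j).filter (fun r => Tolerated (rest Δ j) r)

/-- `Δ` is consistent iff the tolerance partitioning process exhausts `Δ`. -/
def Consistent {V : Type} (Δ : Finset (CondRule V)) : Prop :=
  ∃ n, rest Δ n = ∅

/-- The tolerance partition of `Δ` is `OP(Δ) = (Δ^0, …, Δ^k)`, i.e. the process
stops exactly after the part with index `k` (all parts `Δ^0, …, Δ^k` nonempty). -/
def IsOPLength {V : Type} (Δ : Finset (CondRule V)) (k : ℕ) : Prop :=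
  rest Δ (k + 1) = ∅ ∧ rest Δ k ≠ ∅

/-- `fpart Δ j ω` = `f_Δ^j(ω)`, the set of conditionals of `Δ^j` falsified by `ω`. -/
noncomputable def fpart {V : Type} (Δ : Finset (CondRule V)) (j : ℕ) (ω : V → Bool) :
    Finset (CondRule V) :=
  (part Δ j).filter (fun r => falsifies ω r)

/-- The preferred structure on worlds `ω ≺_Δ ω'`: there is `m` such that
`f_Δ^i(ω) = f_Δ^i(ω')` for all `i > m` and `f_Δ^m(ω) ⊊ f_Δ^m(ω')`.
(For `i` beyond the last index `k` of the tolerance partition of a consistent `Δ`,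
both sides are empty, so this agrees with the textbook definition.) -/
noncomputable def prefRel {V : Type} (Δ : Finset (CondRule V)) (ω ω' : V → Bool) : Prop :=
  ∃ m : ℕ, (∀ i, m < i → fpart Δ i ω = fpart Δ i ω') ∧ fpart Δ m ω ⊂ fpart Δ m ω'

/-- System W inference `A |~_Δ^w B`: for every world `ω' ⊨ A ∧ ¬B` there is a
world `ω ⊨ A ∧ B` with `ω ≺_Δ ω'`. -/
noncomputable def SysWInf {V : Type} (Δ : Finset (CondRule V)) (A B : PForm V) : Prop :=
  ∀ ω' : V → Bool, A.eval ω' = true ∧ B.eval ω' = false →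
    ∃ ω : V → Bool, (A.eval ω = true ∧ B.eval ω = true) ∧ prefRel Δ ω ω'

/-- `Δ = Δ1 ∪_{Sig1,Sig2} Δ2`: `{Sig1, Sig2}` is a partition of the signature, `{Δ1, Δ2}`
partitions `Δ`, and every conditional of `Δi` uses only atoms from `Σi`. -/
def SyntaxSplitting {V : Type} (Sig1 Sig2 : Set V) (Δ Δ1 Δ2 : Finset (CondRule V)) : Prop :=
  Sig1 ∪ Sig2 = Set.univ ∧ Disjoint Sig1 Sig2 ∧
  Δ = Δ1 ∪ Δ2 ∧ Disjoint Δ1 Δ2 ∧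
  (∀ r ∈ Δ1, condVars r ⊆ Sig1) ∧ (∀ r ∈ Δ2, condVars r ⊆ Sig2)

end SysW

namespace SysW

variable {V : Type}

lemma eval_congr (φ : PForm V) {ω ω' : V → Bool} (h : ∀ v ∈ φ.vars, ω v = ω' v) :
    φ.eval ω = φ.eval ω' := by
  induction φ with
  | var v => exact h v rfl
  | tru => rfl
  | fls => rfl
  | neg φ ih => simp [PForm.eval, ih (fun v hv => h v hv)]
  | conj φ ψ ih1 ih2 =>
      simp [PForm.eval, ih1 (fun v hv => h v (Set.mem_union_left _ hv)),
        ih2 (fun v hv => h v (Set.mem_union_right _ hv))]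
  | disj φ ψ ih1 ih2 =>
      simp [PForm.eval, ih1 (fun v hv => h v (Set.mem_union_left _ hv)),
        ih2 (fun v hv => h v (Set.mem_union_right _ hv))]

lemma falsifies_congr (r : CondRule V) {ω ω' : V → Bool}
    (h : ∀ v ∈ condVars r, ω v = ω' v) : falsifies ω r ↔ falsifies ω' r := by
  unfold falsifies
  rw [eval_congr r.ante (fun v hv => h v (Set.mem_union_left _ hv)),
    eval_congr r.cons (fun v hv => h v (Set.mem_union_right _ hv))]

lemma verifies_congr (r : CondRule V) {ω ω' : V → Bool}
    (h : ∀ v ∈ condVars r, ω v = ω' v) : verifies ω r ↔ verifies ω' r := by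
  unfold verifies
  rw [eval_congr r.ante (fun v hv => h v (Set.mem_union_left _ hv)),
    eval_congr r.cons (fun v hv => h v (Set.mem_union_right _ hv))]

lemma rest_subset (Δ : Finset (CondRule V)) : ∀ j, rest Δ j ⊆ Δ
  | 0 => Finset.Subset.refl Δ
  | j + 1 => (Finset.filter_subset _ _).trans (rest_subset Δ j)

lemma part_subset (Δ : Finset (CondRule V)) (j : ℕ) : part Δ j ⊆ Δ :=
  (Finset.filter_subset _ _).trans (rest_subset Δ j)

lemma fpart_subset (Δ : Finset (CondRule V)) (j : ℕ) (ω : V → Bool) :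
    fpart Δ j ω ⊆ Δ :=
  (Finset.filter_subset _ _).trans (part_subset Δ j)

lemma rest_empty_add (Δ : Finset (CondRule V)) {n : ℕ} (h : rest Δ n = ∅) (k : ℕ) :
    rest Δ (n + k) = ∅ := by
  induction k with
  | zero => simpa using h
  | succ k ih => rw [show n + (k + 1) = (n + k) + 1 from rfl, rest, ih]; rfl

lemma rest_stag (Δ : Finset (CondRule V)) {j : ℕ} (h : rest Δ (j + 1) = rest Δ j) (k : ℕ) :
    rest Δ (j + k) = rest Δ j := by
  induction k with
  | zero => rfl
  | succ k ih => rw [show j + (k + 1) = (j + k) + 1 from rfl, rest, ih, ← rest, h]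

lemma exists_noFals (Δ : Finset (CondRule V)) (hcons : Consistent Δ) (j : ℕ) :
    ∃ η : V → Bool, ∀ r ∈ rest Δ j, ¬ falsifies η r := by
  by_contra hc
  push_neg at hc
  have hrestj : rest Δ j ≠ ∅ := by
    intro he
    obtain ⟨r, hr, -⟩ := hc (fun _ => true)
    rw [he] at hr
    exact absurd hr (Finset.notMem_empty r)
  have hnotol : ∀ r, ¬ Tolerated (rest Δ j) r := by
    rintro r ⟨η, -, hf⟩
    obtain ⟨r', hr', hfr'⟩ := hc η
    exact hf r' hr' hfr'
  have hstag : rest Δ (j + 1) = rest Δ j := by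
    rw [rest]
    exact Finset.filter_true_of_mem (fun r _ => hnotol r)
  obtain ⟨n, hn⟩ := hcons
  have h1 : rest Δ (n + j) = ∅ := rest_empty_add Δ hn j
  have h2 : rest Δ (j + n) = rest Δ j := rest_stag Δ hstag n
  rw [Nat.add_comm j n, h1] at h2
  exact hrestj h2.symm

/-- Combining a world on `Sig1` with a world elsewhere. -/
noncomputable def combine (Sig1 : Set V) (ω1 η : V → Bool) : V → Bool :=
  fun v => if v ∈ Sig1 then ω1 v else η v

lemma tol_union_left (Sig1 Sig2 : Set V) (hD : Disjoint Sig1 Sig2)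
    (S1 S2 : Finset (CondRule V))
    (hS1 : ∀ r ∈ S1, condVars r ⊆ Sig1) (hS2 : ∀ r ∈ S2, condVars r ⊆ Sig2)
    (hN : ∃ η : V → Bool, ∀ r ∈ S2, ¬ falsifies η r)
    (r : CondRule V) (hr : condVars r ⊆ Sig1) :
    Tolerated (S1 ∪ S2) r ↔ Tolerated S1 r := by
  constructor
  · rintro ⟨ω, hv, hf⟩
    exact ⟨ω, hv, fun r' hr' => hf r' (Finset.mem_union_left _ hr')⟩
  · rintro ⟨ω1, hv1, hf1⟩
    obtain ⟨η, hη⟩ := hN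
    refine ⟨combine Sig1 ω1 η, ?_, ?_⟩
    · refine (verifies_congr r (fun v hv => ?_)).mpr hv1
      simp [combine, hr hv]
    · intro r' hr'
      rcases Finset.mem_union.mp hr' with h' | h'
      · refine fun hf => hf1 r' h' ((falsifies_congr r' (fun v hv => ?_)).mp hf)
        simp [combine, hS1 r' h' hv]
      · refine fun hf => hη r' h' ((falsifies_congr r' (fun v hv => ?_)).mp hf)
        have : v ∉ Sig1 := Set.disjoint_right.mp hD (hS2 r' h' hv)
        simp [combine, this]

section Split

variable (Sig1 Sig2 : Set V) (Δ1 Δ2 : Finset (CondRule V))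
variable (hD : Disjoint Sig1 Sig2)
variable (h1 : ∀ r ∈ Δ1, condVars r ⊆ Sig1) (h2 : ∀ r ∈ Δ2, condVars r ⊆ Sig2)
variable (hcons : Consistent (Δ1 ∪ Δ2))

include hD h1 h2 hcons

lemma restSplit : ∀ j, rest (Δ1 ∪ Δ2) j = rest Δ1 j ∪ rest Δ2 j := by
  intro j
  induction j with
  | zero => rfl
  | succ j ih =>
      have hN := exists_noFals (Δ1 ∪ Δ2) hcons j
      rw [ih] at hN
      obtain ⟨η, hη⟩ := hN
      have hN1 : ∃ η : V → Bool, ∀ r ∈ rest Δ1 j, ¬ falsifies η r :=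
        ⟨η, fun r hr => hη r (Finset.mem_union_left _ hr)⟩
      have hN2 : ∃ η : V → Bool, ∀ r ∈ rest Δ2 j, ¬ falsifies η r :=
        ⟨η, fun r hr => hη r (Finset.mem_union_right _ hr)⟩
      have hv1 : ∀ r ∈ rest Δ1 j, condVars r ⊆ Sig1 :=
        fun r hr => h1 r (rest_subset Δ1 j hr)
      have hv2 : ∀ r ∈ rest Δ2 j, condVars r ⊆ Sig2 :=
        fun r hr => h2 r (rest_subset Δ2 j hr)
      rw [rest, ih, Finset.filter_union]
      congr 1
      · rw [show rest Δ1 (j+1) = (rest Δ1 j).filter (fun r => ¬ Tolerated (rest Δ1 j) r) from rfl]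
        exact Finset.filter_congr (fun r hr => by
          rw [tol_union_left Sig1 Sig2 hD _ _ hv1 hv2 hN2 r (hv1 r hr)])
      · rw [show rest Δ2 (j+1) = (rest Δ2 j).filter (fun r => ¬ Tolerated (rest Δ2 j) r) from rfl]
        exact Finset.filter_congr (fun r hr => by
          rw [Finset.union_comm,
            tol_union_left Sig2 Sig1 hD.symm _ _ hv2 hv1 hN1 r (hv2 r hr)])

lemma partSplit (j : ℕ) : part (Δ1 ∪ Δ2) j = part Δ1 j ∪ part Δ2 j := by
  have ih := restSplit Sig1 Sig2 Δ1 Δ2 hD h1 h2 hcons j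
  have hN := exists_noFals (Δ1 ∪ Δ2) hcons j
  rw [ih] at hN
  obtain ⟨η, hη⟩ := hN
  have hN1 : ∃ η : V → Bool, ∀ r ∈ rest Δ1 j, ¬ falsifies η r :=
    ⟨η, fun r hr => hη r (Finset.mem_union_left _ hr)⟩
  have hN2 : ∃ η : V → Bool, ∀ r ∈ rest Δ2 j, ¬ falsifies η r :=
    ⟨η, fun r hr => hη r (Finset.mem_union_right _ hr)⟩
  have hv1 : ∀ r ∈ rest Δ1 j, condVars r ⊆ Sig1 :=
    fun r hr => h1 r (rest_subset Δ1 j hr)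
  have hv2 : ∀ r ∈ rest Δ2 j, condVars r ⊆ Sig2 :=
    fun r hr => h2 r (rest_subset Δ2 j hr)
  rw [part, ih, Finset.filter_union]
  congr 1
  · exact Finset.filter_congr (fun r hr => by
      rw [tol_union_left Sig1 Sig2 hD _ _ hv1 hv2 hN2 r (hv1 r hr)])
  · exact Finset.filter_congr (fun r hr => by
      rw [Finset.union_comm,
        tol_union_left Sig2 Sig1 hD.symm _ _ hv2 hv1 hN1 r (hv2 r hr)])

lemma fpartSplit (j : ℕ) (ω : V → Bool) :
    fpart (Δ1 ∪ Δ2) j ω = fpart Δ1 j ω ∪ fpart Δ2 j ω := by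
  rw [fpart, partSplit Sig1 Sig2 Δ1 Δ2 hD h1 h2 hcons j, Finset.filter_union]
  rfl

end Split

end SysW

open SysW in
/-- For a consistent belief base `Δ = Δ1 ∪_{Σ1,Σ2} Δ2` with syntax splitting
and worlds `ω, ω'`, if `ω ≺_{Δ1} ω'` and `ω|_{Σ2} = ω'|_{Σ2}`, then `ω ≺_Δ ω'`. -/
theorem stmt4 {V : Type} [Fintype V] (Sig1 Sig2 : Set V) (Δ Δ1 Δ2 : Finset (CondRule V))
    (hsplit : SyntaxSplitting Sig1 Sig2 Δ Δ1 Δ2) (hcons : Consistent Δ)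
    (ω ω' : V → Bool) (h : prefRel Δ1 ω ω') (hagree : ∀ v ∈ Sig2, ω v = ω' v) :
    prefRel Δ ω ω' := by
  obtain ⟨hU, hD, hΔ, hdis, h1, h2⟩ := hsplit
  subst hΔ
  obtain ⟨m, hall, hlt⟩ := h
  have hC : ∀ i, fpart Δ2 i ω = fpart Δ2 i ω' := by
    intro i
    refine Finset.filter_congr (fun r hr => ?_)
    exact falsifies_congr r (fun v hv => hagree v (h2 r (part_subset Δ2 i hr) hv))
  refine ⟨m, fun i hi => ?_, ?_⟩
  · rw [fpartSplit Sig1 Sig2 Δ1 Δ2 hD h1 h2 hcons i ω,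
      fpartSplit Sig1 Sig2 Δ1 Δ2 hD h1 h2 hcons i ω', hall i hi, hC i]
  · rw [fpartSplit Sig1 Sig2 Δ1 Δ2 hD h1 h2 hcons m ω,
      fpartSplit Sig1 Sig2 Δ1 Δ2 hD h1 h2 hcons m ω', hC m]
    have hsub : fpart Δ1 m ω ∪ fpart Δ2 m ω' ⊆ fpart Δ1 m ω' ∪ fpart Δ2 m ω' :=
      Finset.union_subset_union_left hlt.subset
    rw [Finset.ssubset_iff_of_subset hsub]
    obtain ⟨x, hxB, hxA⟩ := Finset.exists_of_ssubset hlt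
    refine ⟨x, Finset.mem_union_left _ hxB, fun hx => ?_⟩
    rcases Finset.mem_union.mp hx with h' | h'
    · exact hxA h'
    · exact (Finset.disjoint_left.mp hdis (fpart_subset Δ1 m ω' hxB))
        (fpart_subset Δ2 m ω' h')
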